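/- For b(t) = t e^{−t}, with r(t,−|n|²) = e^{−t} sin(|n| t)/|n| for n ≠ 0, one has |n|² ∫₀^∞ [r(s,−|n|²)]² ds = |n|²/(4 + 4|n|²), which converges to 1/4 as |n| → ∞. Hence b(t) = t e^{−t} is admissible with C_b = 1/4. -/

import Mathlib

open MeasureTheory Real Filter

lemma key_integral (x : ℝ) (hx : 0 < x) :
    ∫ s in Set.Ioi (0 : ℝ), Real.exp (-(2*s)) * Real.sin (x * s) ^ 2
      = x ^ 2 / (4 + 4 * x ^ 2) := by
  have hx2 : (0:ℝ) < 1 + x ^ 2 := by positivity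
  set F : ℝ → ℝ := fun s => Real.exp (-(2*s)) *
      (-(1:ℝ)/4 + (Real.cos (2*x*s) - x * Real.sin (2*x*s)) / (4*(1+x^2))) with hF
  have hderiv : ∀ s : ℝ, HasDerivAt F (Real.exp (-(2*s)) * Real.sin (x*s) ^ 2) s := by
    intro s
    have h1 : HasDerivAt (fun s : ℝ => Real.exp (-(2*s))) (Real.exp (-(2*s)) * (-2)) s := by
      simpa using (HasDerivAt.exp (((hasDerivAt_id s).const_mul (2:ℝ)).neg))
    have h2 : HasDerivAt (fun s : ℝ => Real.cos (2*x*s)) (-Real.sin (2*x*s) * (2*x)) s := by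
      simpa using (HasDerivAt.cos ((hasDerivAt_id s).const_mul (2*x)))
    have h3 : HasDerivAt (fun s : ℝ => Real.sin (2*x*s)) (Real.cos (2*x*s) * (2*x)) s := by
      simpa using (HasDerivAt.sin ((hasDerivAt_id s).const_mul (2*x)))
    have h4 : HasDerivAt (fun s : ℝ => -(1:ℝ)/4 + (Real.cos (2*x*s) - x * Real.sin (2*x*s)) / (4*(1+x^2)))
        ((-Real.sin (2*x*s) * (2*x) - x * (Real.cos (2*x*s) * (2*x))) / (4*(1+x^2))) s :=
      (((h2.sub (h3.const_mul x)).div_const _).const_add _)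
    have h5 := h1.mul h4
    refine h5.congr_deriv ?_
    symm
    have hs : Real.sin (x*s) ^ 2 = 1/2 - Real.cos (2*(x*s))/2 := by
      have := Real.cos_sq (x*s)
      have h9 := Real.sin_sq_add_cos_sq (x*s)
      linarith
    rw [hs]
    have h6 : 2*(x*s) = 2*x*s := by ring
    rw [h6]
    field_simp
    ring
  have hint : IntegrableOn (fun s => Real.exp (-(2*s)) * Real.sin (x*s) ^ 2) (Set.Ioi (0:ℝ)) := by
    have hexp : IntegrableOn (fun s : ℝ => Real.exp (-2*s)) (Set.Ioi (0:ℝ)) :=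
      exp_neg_integrableOn_Ioi (0:ℝ) (by norm_num : (0:ℝ) < 2)
    refine hexp.mono' ?_ ?_
    · exact ((Real.continuous_exp.comp (continuous_const.mul continuous_id).neg).mul
        ((Real.continuous_sin.comp (continuous_const.mul continuous_id)).pow 2)).aestronglyMeasurable
    · filter_upwards with s
      have h1 : Real.sin (x*s) ^ 2 ≤ 1 := Real.sin_sq_le_one (x*s)
      have h0 : 0 ≤ Real.sin (x*s) ^ 2 := sq_nonneg _
      have he : 0 < Real.exp (-(2*s)) := Real.exp_pos _
      rw [norm_mul, Real.norm_eq_abs, Real.norm_eq_abs, abs_of_pos he, abs_of_nonneg h0,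
        neg_mul]
      nlinarith
  have htend : Tendsto F atTop (nhds 0) := by
    have hg : Tendsto (fun s : ℝ => Real.exp (-(2*s)) * (1/4 + (1+x)/(4*(1+x^2)))) atTop (nhds 0) := by
      have h8 : Tendsto (fun s : ℝ => -(2*s)) atTop atBot :=
        tendsto_neg_atBot_iff.mpr (tendsto_id.const_mul_atTop two_pos)
      simpa using (Real.tendsto_exp_atBot.comp h8).mul_const (1/4 + (1+x)/(4*(1+x^2)))
    apply squeeze_zero_norm _ hg
    · intro s
      have he : 0 < Real.exp (-(2*s)) := Real.exp_pos _
      rw [hF]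
      simp only [norm_mul, Real.norm_eq_abs, abs_of_pos he]
      gcongr
      calc |(-(1:ℝ)/4 + (Real.cos (2*x*s) - x * Real.sin (2*x*s)) / (4*(1+x^2)))|
          ≤ |(-(1:ℝ)/4)| + |(Real.cos (2*x*s) - x * Real.sin (2*x*s)) / (4*(1+x^2))| := abs_add_le _ _
        _ ≤ 1/4 + (1+x)/(4*(1+x^2)) := by
            have h7 : |(-(1:ℝ)/4)| = 1/4 := by norm_num
            rw [h7, abs_div, abs_of_pos (show (0:ℝ) < 4*(1+x^2) by positivity)]
            gcongr
            calc |Real.cos (2*x*s) - x * Real.sin (2*x*s)|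
                ≤ |Real.cos (2*x*s)| + |x * Real.sin (2*x*s)| := abs_sub _ _
              _ ≤ 1 + x := by
                  rw [abs_mul, abs_of_pos hx]
                  have hc := Real.abs_cos_le_one (2*x*s)
                  have hsn := Real.abs_sin_le_one (2*x*s)
                  nlinarith
  have := integral_Ioi_of_hasDerivAt_of_tendsto' (a := 0) (fun s _ => hderiv s) hint htend
  rw [this, hF]
  simp [Real.exp_zero]
  field_simp
  ring

/-- Admissibility of the kernel `b(t) = t e^{−t}`: with `r(s,−x²) = e^{−s} sin(xs)/x` for
`x > 0`, one has `x² ∫₀^∞ r(s,−x²)² ds = x²/(4+4x²)`, which converges to `1/4` as `x → ∞`,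
so `b(t) = t e^{−t}` is admissible with `C_b = 1/4`. -/
theorem texp_kernel_admissible :
    (∀ x : ℝ, 0 < x →
      x ^ 2 * ∫ s in Set.Ioi (0 : ℝ), (Real.exp (-s) * Real.sin (x * s) / x) ^ 2
        = x ^ 2 / (4 + 4 * x ^ 2)) ∧
    Tendsto (fun x : ℝ =>
        x ^ 2 * ∫ s in Set.Ioi (0 : ℝ), (Real.exp (-s) * Real.sin (x * s) / x) ^ 2)
      atTop (nhds (1 / 4)) := by
  have h1 : ∀ x : ℝ, 0 < x →
      x ^ 2 * ∫ s in Set.Ioi (0 : ℝ), (Real.exp (-s) * Real.sin (x * s) / x) ^ 2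
        = x ^ 2 / (4 + 4 * x ^ 2) := by
    intro x hx
    have hpt : ∀ s : ℝ, (Real.exp (-s) * Real.sin (x * s) / x) ^ 2
        = (Real.exp (-(2*s)) * Real.sin (x * s) ^ 2) / x ^ 2 := by
      intro s
      rw [div_pow, mul_pow, sq (Real.exp (-s)), ← Real.exp_add]
      have : -s + -s = -(2*s) := by ring
      rw [this]
    simp_rw [hpt, integral_div, key_integral x hx]
    have hx0 : x ≠ 0 := ne_of_gt hx
    field_simp
  refine ⟨h1, ?_⟩
  have h2 : Tendsto (fun x : ℝ => x ^ 2 / (4 + 4 * x ^ 2)) atTop (nhds (1/4)) := by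
    have h3 : Tendsto (fun x : ℝ => 4 + 4 * x ^ 2) atTop atTop := by
      apply tendsto_atTop_add_const_left
      exact (tendsto_pow_atTop two_ne_zero).const_mul_atTop four_pos
    have h4 : Tendsto (fun x : ℝ => (4 + 4 * x ^ 2)⁻¹) atTop (nhds 0) :=
      tendsto_inv_atTop_zero.comp h3
    have h5 : Tendsto (fun x : ℝ => 1/4 - (4 + 4 * x ^ 2)⁻¹) atTop (nhds (1/4 - 0)) :=
      tendsto_const_nhds.sub h4
    rw [sub_zero] at h5
    refine h5.congr fun x => ?_
    have hd : (4 + 4 * x ^ 2) ≠ 0 := by positivity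
    field_simp
    ring
  refine h2.congr' ?_
  filter_upwards [eventually_gt_atTop (0:ℝ)] with x hx
  exact (h1 x hx).symm
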